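/- arXiv:2112.01056 — 6 statements merged into one kernel-verified Lean document; each statement's English description precedes it below -/
import Mathlib

section
/- Let G be a group and let g ∈ G be an element of infinite order. Then the element 1 - g is not a zero divisor in the integral group ring ℤ[G]; that is, for all x ∈ ℤ[G], (1-g)·x = 0 implies x = 0, and x·(1-g) = 0 implies x = 0. -/
/-! If `(1 - g) * x = 0` then the coefficient function of `x` is invariant under left translation
by `g`, so the support of `x` is a union of orbits `{gⁿ a}`. When `g` has infinite order these
orbits are infinite, while the support is finite; hence `x = 0`. -/

open MonoidAlgebra Function

theorem Finsupp.eq_zero_of_comp_eq_of_injective_iterate {α M : Type*} [Zero M] (f : α →₀ M)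
    {σ : α → α} (hσ : ∀ a, Injective fun n => σ^[n] a) (hf : ⇑f ∘ σ = ⇑f) : f = 0 := by
  by_contra hne
  obtain ⟨a, ha⟩ := Finsupp.support_nonempty_iff.mpr hne
  have horbit : ∀ n, σ^[n] a ∈ f.support := fun n => by
    rwa [mem_support_iff, ← comp_apply (f := f), iterate_invariant hf, ← mem_support_iff]
  exact Set.infinite_of_injective_forall_mem (hσ a) horbit f.support.finite_toSet

namespace MonoidAlgebra

variable {k G : Type*} [Semiring k] [CancelMonoid G] {g : G}

theorem eq_zero_of_of_mul_eq_self (hg : ¬IsOfFinOrder g) {x : MonoidAlgebra k G}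
    (hx : of k G g * x = x) : x = 0 := by
  have hσ : ∀ a : G, Injective fun n => (g * ·)^[n] a := fun a => by
    simpa only [mul_left_iterate_apply, comp_def] using
      (mul_left_injective a).comp (injective_pow_iff_not_isOfFinOrder.mpr hg)
  rw [← coeff_inj, coeff_zero]
  refine Finsupp.eq_zero_of_comp_eq_of_injective_iterate x.coeff hσ (funext fun a => ?_)
  simpa using congr(($hx).coeff (g * a)).symm

theorem eq_zero_of_mul_of_eq_self (hg : ¬IsOfFinOrder g) {x : MonoidAlgebra k G}
    (hx : x * of k G g = x) : x = 0 := by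
  have hσ : ∀ a : G, Injective fun n => (· * g)^[n] a := fun a => by
    simpa only [mul_right_iterate_apply, comp_def] using
      (mul_right_injective a).comp (injective_pow_iff_not_isOfFinOrder.mpr hg)
  rw [← coeff_inj, coeff_zero]
  refine Finsupp.eq_zero_of_comp_eq_of_injective_iterate x.coeff hσ (funext fun a => ?_)
  simpa using congr(($hx).coeff (a * g)).symm

end MonoidAlgebra

theorem one_sub_infinite_order_not_zero_divisor
    {G : Type*} [Group G] (g : G) (hg : ∀ n : ℕ, 0 < n → g ^ n ≠ 1) :
    ∀ x : MonoidAlgebra ℤ G,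
      ((1 - MonoidAlgebra.of ℤ G g) * x = 0 → x = 0) ∧
      (x * (1 - MonoidAlgebra.of ℤ G g) = 0 → x = 0) := by
  have hg : ¬IsOfFinOrder g := fun hfin => by
    obtain ⟨n, hn, hpow⟩ := isOfFinOrder_iff_pow_eq_one.mp hfin
    exact hg n hn hpow
  intro x
  constructor
  · intro hx
    rw [sub_mul, one_mul, sub_eq_zero] at hx
    exact eq_zero_of_of_mul_eq_self hg hx.symm
  · intro hx
    rw [mul_sub, mul_one, sub_eq_zero] at hx
    exact eq_zero_of_mul_of_eq_self hg hx.symm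
end

section
/- Let G be a finitely generated residually finite group. Then the integral group ring ℤ[G] is residually finite as a ring: for every nonzero r ∈ ℤ[G] there exists a finite (nontrivial) ring S and a ring homomorphism π : ℤ[G] → S with π(r) ≠ 0. -/
/-!
Separating the finitely many pairwise quotients of the support of `r` by one homomorphism `φ`
(a product of the homomorphisms given by residual finiteness) makes `φ` injective on the support,
so a nonzero coefficient `c` of `r` survives in `ℤ[H]` for a finite group `H`. Reducing modulo
`|c| + 1` then keeps it nonzero in the finite ring `(ℤ/(|c|+1))[H]`.
-/

open MonoidAlgebra

theorem ZMod.intCast_natAbs_succ_ne_zero {c : ℤ} (hc : c ≠ 0) :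
    (c : ZMod (c.natAbs + 1)) ≠ 0 := by
  rw [Ne, ZMod.intCast_zmod_eq_zero_iff_dvd]
  exact fun hdvd => hc (Int.eq_zero_of_dvd_of_natAbs_lt_natAbs hdvd (by omega))

instance MonoidAlgebra.finite {R M : Type*} [Semiring R] [Finite R] [Finite M] :
    Finite (MonoidAlgebra R M) :=
  Finite.of_injective (fun x : MonoidAlgebra R M => ⇑x.coeff)
    (DFunLike.coe_injective.comp coeff_injective)

theorem MonoidAlgebra.coeff_mapDomain_of_injOn {R M N : Type*} [Semiring R] {f : M → N}
    {x : MonoidAlgebra R M} (hf : Set.InjOn f x.coeff.support) {a : M}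
    (ha : a ∈ x.coeff.support) : (mapDomain f x).coeff (f a) = x.coeff a := by
  rw [coeff_mapDomain]
  exact Finsupp.mapDomain_apply' _ _ subset_rfl hf ha

section ResiduallyFinite

variable {G : Type*} [Group G]

theorem exists_finite_monoidHom_forall_ne_one
    (hrf : ∀ g : G, g ≠ 1 → ∃ (H : Type) (_ : Group H) (_ : Finite H) (φ : G →* H), φ g ≠ 1)
    (T : Finset G) (hT : ∀ g ∈ T, g ≠ 1) :
    ∃ (H : Type) (_ : Group H) (_ : Finite H) (φ : G →* H), ∀ g ∈ T, φ g ≠ 1 := by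
  classical
  induction T using Finset.induction_on with
  | empty => exact ⟨Unit, inferInstance, inferInstance, 1, by simp⟩
  | insert g T _ ih =>
    obtain ⟨H₁, _, _, φ₁, hφ₁⟩ := ih fun g' hg' => hT g' (Finset.mem_insert_of_mem hg')
    obtain ⟨H₂, _, _, φ₂, hφ₂⟩ := hrf g (hT g (Finset.mem_insert_self g T))
    refine ⟨H₁ × H₂, inferInstance, inferInstance, φ₁.prod φ₂, fun g' hg' => ?_⟩
    rcases Finset.mem_insert.mp hg' with rfl | hg'
    · exact fun h => hφ₂ (congrArg Prod.snd h)
    · exact fun h => hφ₁ g' hg' (congrArg Prod.fst h)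

theorem exists_finite_monoidHom_injOn
    (hrf : ∀ g : G, g ≠ 1 → ∃ (H : Type) (_ : Group H) (_ : Finite H) (φ : G →* H), φ g ≠ 1)
    (s : Finset G) :
    ∃ (H : Type) (_ : Group H) (_ : Finite H) (φ : G →* H), Set.InjOn φ s := by
  classical
  obtain ⟨H, _, _, φ, hφ⟩ := exists_finite_monoidHom_forall_ne_one hrf
    (s.offDiag.image fun p => p.1 * p.2⁻¹) (by
      simp only [Finset.mem_image, Finset.mem_offDiag]
      rintro _ ⟨⟨a, b⟩, ⟨-, -, hab⟩, rfl⟩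
      exact fun h => hab (mul_inv_eq_one.mp h))
  refine ⟨H, inferInstance, inferInstance, φ, fun a ha b hb hab => by_contra fun hne => ?_⟩
  exact hφ (a * b⁻¹) (Finset.mem_image.mpr ⟨(a, b), Finset.mem_offDiag.mpr ⟨ha, hb, hne⟩, rfl⟩)
    (by rw [map_mul, map_inv, hab, mul_inv_cancel])

end ResiduallyFinite

theorem groupRing_residually_finite_general
    {G : Type*} [Group G]
    (hrf : ∀ g : G, g ≠ 1 →
      ∃ (H : Type) (_ : Group H) (_ : Finite H) (φ : G →* H), φ g ≠ 1) :
    ∀ r : MonoidAlgebra ℤ G, r ≠ 0 →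
      ∃ (S : Type) (_ : Ring S) (_ : Finite S) (_ : Nontrivial S)
        (π : MonoidAlgebra ℤ G →+* S), π r ≠ 0 := by
  intro r hr
  obtain ⟨H, _, _, φ, hφ⟩ := exists_finite_monoidHom_injOn hrf r.coeff.support
  obtain ⟨a, ha⟩ : r.coeff.support.Nonempty :=
    Finsupp.support_nonempty_iff.mpr (mt coeff_eq_zero.mp hr)
  let n := (r.coeff a).natAbs + 1
  let π := (mapRingHom H (Int.castRingHom (ZMod n))).comp (mapDomainRingHom ℤ φ)
  have hπ : π r ≠ 0 := fun h => ZMod.intCast_natAbs_succ_ne_zero (Finsupp.mem_support_iff.mp ha) <|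
    calc ((r.coeff a : ℤ) : ZMod n)
        = (π r).coeff (φ a) := by
          rw [RingHom.comp_apply, coeff_mapRingHom, mapDomainRingHom_apply,
            coeff_mapDomain_of_injOn hφ ha, eq_intCast]
      _ = 0 := by rw [h, coeff_zero, Finsupp.coe_zero, Pi.zero_apply]
  exact ⟨MonoidAlgebra (ZMod n) H, inferInstance, inferInstance, nontrivial_of_ne _ _ hπ, π, hπ⟩

theorem groupRing_residually_finite
    {G : Type*} [Group G] (hfg : Group.FG G)
    (hrf : ∀ g : G, g ≠ 1 →
      ∃ (H : Type) (_ : Group H) (_ : Finite H) (φ : G →* H), φ g ≠ 1) :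
    ∀ r : MonoidAlgebra ℤ G, r ≠ 0 →
      ∃ (S : Type) (_ : Ring S) (_ : Finite S) (_ : Nontrivial S)
        (π : MonoidAlgebra ℤ G →+* S), π r ≠ 0 :=
  groupRing_residually_finite_general hrf
end

section
/- Let R be a finitely generated ring that is residually finite as a ring. Then R is Hopfian: every surjective ring homomorphism R → R is injective. Equivalently, R is not isomorphic to a proper quotient of itself. -/
theorem fg_residually_finite_ring_hopfian
    {R : Type*} [Ring R]
    (hfg : ∃ s : Finset R, Subring.closure (s : Set R) = ⊤)
    (hrf : ∀ r : R, r ≠ 0 →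
      ∃ (S : Type) (_ : Ring S) (_ : Finite S) (π : R →+* S), π r ≠ 0) :
    ∀ f : R →+* R, Function.Surjective f → Function.Injective f := by
  intro f hf
  rw [injective_iff_map_eq_zero]
  intro r hfr
  by_contra hr0
  obtain ⟨S, _, _, π, hπ⟩ := hrf r hr0
  obtain ⟨s, hs⟩ := hfg
  have hfin : Finite (R →+* S) := by
    have hinj : Function.Injective (fun (g : R →+* S) => (fun x : s => g x)) := by
      intro g₁ g₂ h
      have hle : Subring.closure (s : Set R) ≤ RingHom.eqLocus g₁ g₂ := by
        apply Subring.closure_le.2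
        intro x hx
        exact congrFun h ⟨x, hx⟩
      ext x
      exact hle (hs ▸ Subring.mem_top x)
    exact Finite.of_injective _ hinj
  have hsurj : ∀ n : ℕ, Function.Surjective (f ^ n) := fun n => by
    simpa [RingHom.coe_pow] using hf.iterate n
  obtain ⟨i, j, hne, hij⟩ := Finite.exists_ne_map_eq_of_infinite
    (fun n : ℕ => π.comp (f ^ n))
  wlog hlt : i < j generalizing i j
  · exact this j i hne.symm hij.symm (by omega)
  set k := j - i with hk
  have hk1 : 1 ≤ k := by omega
  have key : ∀ x, π x = π ((f ^ k) x) := by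
    intro x
    obtain ⟨y, hy⟩ := hsurj i x
    have h1 : π ((f ^ i) y) = π ((f ^ j) y) := congrFun (congrArg DFunLike.coe hij) y
    have h2 : (f ^ j) y = (f ^ k) ((f ^ i) y) := by
      have : f ^ j = f ^ k * f ^ i := by rw [← pow_add]; congr 1; omega
      rw [this]; rfl
    rw [hy] at h1 h2
    rw [h1, h2]
  have hzero : (f ^ k) r = 0 := by
    have : f ^ k = f ^ (k - 1) * f := by rw [← pow_succ]; congr 1; omega
    rw [this]
    show (f ^ (k - 1)) (f r) = 0
    rw [hfr, map_zero]
  have := key r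
  rw [hzero, map_zero] at this
  exact hπ this
end

section
/- Let G and H be finitely generated subgroups of a free group F. Then the intersection of the sub-group-rings ℤ[G] and ℤ[H] inside ℤ[F] equals ℤ[G ∩ H], and in particular G ∩ H is finitely generated (Howson property), so ℤ[G] ∩ ℤ[H] is a group ring of a finitely generated free group. -/
/-!
For `K ≤ F(α)`, call the right cosets `K * p`, with `p` spelled by a prefix of the reduced word of
an element of `K`, the prefix cosets of `K`. A finitely generated `K` has finitely many of them,
since every prefix of a product of generators lies in the coset of a prefix of a single generator
or its inverse (reduced words of products only cancel at the junction). The prefix coset of `p` in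
`G ⊓ H` is determined by its cosets in `G` and in `H`, so `G ⊓ H` has finitely many as well. If
`K` has `N` prefix cosets, pigeonhole among the first `N + 1` prefixes of a word `k ∈ K` longer
than `2N` gives prefixes `p_i`, `p_j` (`i < j`) in one coset; then `p_j * p_i⁻¹ ∈ K` has length
`≤ 2N` and cutting it off shortens `k`. So `K` is generated by its elements of length `≤ 2N`, of
which there are finitely many because all their letters occur in the finitely many generators.
Finally, the intersection is free by Nielsen–Schreier, of finite rank since it is finitely
generated.
-/

namespace FreeGroup

open List Subgroup Finset

variable {α : Type*}

section DecidableEq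

variable [DecidableEq α]

theorem IsReduced.exists_append_invRev {u v : List (α × Bool)} (hu : IsReduced u)
    (hv : IsReduced v) :
    ∃ u₁ w v₁, u = u₁ ++ w ∧ v = invRev w ++ v₁ ∧ IsReduced (u₁ ++ v₁) := by
  induction v generalizing u with
  | nil => exact ⟨u, [], [], by simp, by simp [invRev], by simpa⟩
  | cons y v ih =>
    rcases u.eq_nil_or_concat with rfl | ⟨u, x, rfl⟩
    · exact ⟨[], [], y :: v, rfl, by simp [invRev], hv⟩
    rw [concat_eq_append] at hu ⊢
    by_cases hxy : x = (y.1, !y.2)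
    · obtain ⟨u₁, w, v₁, rfl, rfl, h⟩ :=
        ih (hu.infix (prefix_append u [x]).isInfix) (hv.infix (suffix_cons y v).isInfix)
      exact ⟨u₁, w ++ [x], v₁, by simp, by simp [invRev, hxy], h⟩
    · refine ⟨u ++ [x], [], y :: v, by simp, by simp [invRev], ?_⟩
      have hjunction : IsReduced ([x] ++ y :: v) := by
        refine isReduced_cons_cons.2 ⟨fun h => ?_, hv⟩
        obtain ⟨x₁, x₂⟩ := x
        obtain ⟨y₁, y₂⟩ := y
        cases x₂ <;> cases y₂ <;> simp_all
      simpa using hu.append_overlap hjunction (cons_ne_nil x [])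

theorem toWord_mul_eq_append (x y : FreeGroup α) :
    ∃ u w v, x.toWord = u ++ w ∧ y.toWord = invRev w ++ v ∧ (x * y).toWord = u ++ v := by
  obtain ⟨u, w, v, hx, hy, huv⟩ :=
    (isReduced_toWord (x := x)).exists_append_invRev (isReduced_toWord (x := y))
  refine ⟨u, w, v, hx, hy, ?_⟩
  have : x * y = mk (u ++ v) := by
    rw [← mk_toWord (x := x), ← mk_toWord (x := y), hx, hy, ← mul_mk, ← mul_mk, ← mul_mk,
      ← inv_mk]
    group
  rw [this, toWord_mk, huv.reduce_eq]

def prefixes (g : FreeGroup α) : Finset (FreeGroup α) := g.toWord.inits.toFinset.image mk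

theorem mem_prefixes {g p : FreeGroup α} : p ∈ prefixes g ↔ ∃ l, l <+: g.toWord ∧ mk l = p := by
  simp [prefixes]

theorem prefixes_mul_subset (x y : FreeGroup α) :
    prefixes (x * y) ⊆ prefixes x ∪ (prefixes y).image (x * ·) := by
  obtain ⟨u, w, v, hx, hy, hxy⟩ := toWord_mul_eq_append x y
  intro p hp
  obtain ⟨l, hl, rfl⟩ := mem_prefixes.1 hp
  rw [hxy] at hl
  rw [Finset.mem_union, Finset.mem_image, mem_prefixes]
  rcases prefix_or_prefix_of_prefix hl (prefix_append u v) with hlu | ⟨t, rfl⟩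
  · exact .inl ⟨l, hlu.trans (hx ▸ prefix_append u w), rfl⟩
  · refine .inr ⟨mk (invRev w ++ t), mem_prefixes.2 ⟨_, ?_, rfl⟩, ?_⟩
    · rw [hy]
      exact (prefix_append_right_inj _).2 ((prefix_append_right_inj u).1 hl)
    · rw [← mk_toWord (x := x), hx, ← mul_mk, ← mul_mk, ← inv_mk, ← mul_mk]
      group

def letters (S : Finset (FreeGroup α)) : Finset (α × Bool) :=
  S.biUnion fun s => (s.toWord ++ s⁻¹.toWord).toFinset

theorem mem_letters_of_mem_closure {S : Finset (FreeGroup α)} {g : FreeGroup α}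
    (hg : g ∈ closure (S : Set (FreeGroup α))) {p : α × Bool} (hp : p ∈ g.toWord) :
    p ∈ letters S := by
  induction hg using closure_induction'' with
  | mem s hs => exact Finset.mem_biUnion.2 ⟨s, hs, List.mem_toFinset.2 (mem_append_left _ hp)⟩
  | inv_mem s hs =>
    exact Finset.mem_biUnion.2 ⟨s, hs, List.mem_toFinset.2 (mem_append_right _ hp)⟩
  | one => simp at hp
  | mul x y _ _ ihx ihy =>
    rcases mem_append.1 ((toWord_mul_sublist x y).subset hp) with h | h
    exacts [ihx h, ihy h]

theorem finite_setOf_mem_closure_norm_le (S : Finset (FreeGroup α)) (n : ℕ) :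
    {g | g ∈ closure (S : Set (FreeGroup α)) ∧ norm g ≤ n}.Finite := by
  refine ((List.finite_length_le (letters S) n).image fun l => mk (l.map (↑))).subset ?_
  rintro g ⟨hg, hn⟩
  obtain ⟨l, hl⟩ : ∃ l : List (letters S), l.map (↑) = g.toWord :=
    CanLift.prf _ fun p hp => mem_letters_of_mem_closure hg hp
  refine ⟨l, ?_, show mk _ = g by rw [hl, mk_toWord]⟩
  show l.length ≤ n
  rwa [← length_map (f := Subtype.val), hl]

/-- The witness `C` meets every prefix coset of `K`; these cosets are the vertices of the
Stallings core graph of `K`. -/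
def HasFinitelyManyPrefixCosets (K : Subgroup (FreeGroup α)) : Prop :=
  ∃ C : Finset (FreeGroup α), ∀ k ∈ K, ∀ p ∈ prefixes k, ∃ c ∈ C, p * c⁻¹ ∈ K

theorem hasFinitelyManyPrefixCosets_closure (S : Finset (FreeGroup α)) :
    HasFinitelyManyPrefixCosets (closure (S : Set (FreeGroup α))) := by
  refine ⟨insert 1 (S.biUnion fun s => prefixes s ∪ prefixes s⁻¹), fun k hk => ?_⟩
  induction hk using closure_induction'' with
  | mem s hs => exact fun p hp =>
    ⟨p, Finset.mem_insert_of_mem (Finset.mem_biUnion.2 ⟨s, hs, Finset.mem_union_left _ hp⟩),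
      by simp [one_mem]⟩
  | inv_mem s hs => exact fun p hp =>
    ⟨p, Finset.mem_insert_of_mem (Finset.mem_biUnion.2 ⟨s, hs, Finset.mem_union_right _ hp⟩),
      by simp [one_mem]⟩
  | one =>
    intro p hp
    obtain ⟨l, hl, rfl⟩ := mem_prefixes.1 hp
    rw [toWord_one, prefix_nil] at hl
    exact ⟨1, Finset.mem_insert_self _ _, by simp [hl, ← one_eq_mk, one_mem]⟩
  | mul x y hx _ ihx ihy =>
    intro p hp
    rcases Finset.mem_union.1 (prefixes_mul_subset x y hp) with hp | hp
    · exact ihx p hp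
    · obtain ⟨q, hq, rfl⟩ := Finset.mem_image.1 hp
      obtain ⟨c, hc, hqc⟩ := ihy q hq
      exact ⟨c, hc, by simpa only [mul_assoc] using mul_mem hx hqc⟩

theorem HasFinitelyManyPrefixCosets.inf {G H : Subgroup (FreeGroup α)}
    (hG : HasFinitelyManyPrefixCosets G) (hH : HasFinitelyManyPrefixCosets H) :
    HasFinitelyManyPrefixCosets (G ⊓ H) := by
  obtain ⟨C, hGC⟩ := hG
  obtain ⟨D, hHD⟩ := hH
  let rep (c d : FreeGroup α) := Classical.epsilon fun r => r * c⁻¹ ∈ G ∧ r * d⁻¹ ∈ H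
  refine ⟨Finset.image₂ rep C D, fun k hk p hp => ?_⟩
  obtain ⟨c, hc, hpc⟩ := hGC k hk.1 p hp
  obtain ⟨d, hd, hpd⟩ := hHD k hk.2 p hp
  obtain ⟨hrc, hrd⟩ : rep c d * c⁻¹ ∈ G ∧ rep c d * d⁻¹ ∈ H :=
    Classical.epsilon_spec (p := fun r => r * c⁻¹ ∈ G ∧ r * d⁻¹ ∈ H) ⟨p, hpc, hpd⟩
  refine ⟨rep c d, Finset.mem_image₂_of_mem hc hd, ?_, ?_⟩
  · simpa using mul_mem hpc (inv_mem hrc)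
  · simpa using mul_mem hpd (inv_mem hrd)

theorem norm_mk_take_mul_inv_mk_take_mul_lt (g : FreeGroup α) {i j : ℕ} (hij : i < j)
    (hj : j ≤ norm g) :
    norm (mk (g.toWord.take i) * (mk (g.toWord.take j))⁻¹ * g) < norm g := by
  have hsuffix : (mk (g.toWord.take j))⁻¹ * g = mk (g.toWord.drop j) := by
    rw [inv_mul_eq_iff_eq_mul, mul_mk, take_append_drop, mk_toWord]
  rw [mul_assoc, hsuffix, mul_mk]
  refine norm_mk_le.trans_lt ?_
  simp only [norm] at hj ⊢
  simp only [length_append, length_take, length_drop]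
  omega

theorem exists_norm_le_norm_inv_mul_lt {K : Subgroup (FreeGroup α)}
    {C : Finset (FreeGroup α)} (hC : ∀ k ∈ K, ∀ p ∈ prefixes k, ∃ c ∈ C, p * c⁻¹ ∈ K)
    {k : FreeGroup α} (hk : k ∈ K) (hlt : 2 * #C < norm k) :
    ∃ a ∈ K, norm a ≤ 2 * #C ∧ norm (a⁻¹ * k) < norm k := by
  set w := k.toWord
  choose c hcC hc using fun i =>
    hC k hk (mk (w.take i)) (mem_prefixes.2 ⟨_, take_prefix i w, rfl⟩)
  obtain ⟨i, hi, j, hj, hne, hcij⟩ :=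
    exists_ne_map_eq_of_card_lt_of_maps_to (s := range (#C + 1)) (by simp) fun i _ => hcC i
  rw [Finset.mem_range] at hi hj
  wlog hij : i < j generalizing i j
  · exact this j hj i hi hne.symm hcij.symm (by omega)
  refine ⟨mk (w.take j) * (mk (w.take i))⁻¹, ?_, ?_, ?_⟩
  · simpa [hcij, mul_assoc] using mul_mem (hc j) (inv_mem (hc i))
  · refine (norm_mul_le _ _).trans ?_
    rw [norm_inv_eq]
    have := (norm_mk_le (L₁ := w.take j)).trans (length_take_le j w)
    have := (norm_mk_le (L₁ := w.take i)).trans (length_take_le i w)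
    omega
  · rw [mul_inv_rev, inv_inv]
    exact norm_mk_take_mul_inv_mk_take_mul_lt k hij (by omega)

theorem closure_setOf_norm_le_eq {K : Subgroup (FreeGroup α)} {n : ℕ}
    (h : ∀ k ∈ K, n < norm k → ∃ a ∈ K, norm a ≤ n ∧ norm (a⁻¹ * k) < norm k) :
    closure {g | g ∈ K ∧ norm g ≤ n} = K := by
  refine le_antisymm ((closure_le _).2 fun g hg => hg.1) fun k hk => ?_
  induction hm : norm k using Nat.strong_induction_on generalizing k with
  | _ m ih =>
    by_cases hkn : norm k ≤ n
    · exact Subgroup.subset_closure ⟨hk, hkn⟩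
    obtain ⟨a, ha, han, hlt⟩ := h k hk (not_le.1 hkn)
    have ha_mem : a ∈ closure {g | g ∈ K ∧ norm g ≤ n} := Subgroup.subset_closure ⟨ha, han⟩
    have := ih _ (hm ▸ hlt) (a⁻¹ * k) (mul_mem (inv_mem ha) hk) rfl
    simpa using mul_mem ha_mem this

theorem HasFinitelyManyPrefixCosets.exists_closure_setOf_norm_le_eq
    {K : Subgroup (FreeGroup α)} (hK : HasFinitelyManyPrefixCosets K) :
    ∃ n, closure {g | g ∈ K ∧ norm g ≤ n} = K :=
  let ⟨_, hC⟩ := hK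
  ⟨_, closure_setOf_norm_le_eq fun _ hk => exists_norm_le_norm_inv_mul_lt hC hk⟩

end DecidableEq

theorem fg_inf {G H : Subgroup (FreeGroup α)} (hG : G.FG) (hH : H.FG) : (G ⊓ H).FG := by
  classical
  obtain ⟨S, rfl⟩ := hG
  obtain ⟨T, rfl⟩ := hH
  obtain ⟨n, hn⟩ := ((hasFinitelyManyPrefixCosets_closure S).inf
    (hasFinitelyManyPrefixCosets_closure T)).exists_closure_setOf_norm_le_eq
  exact (Subgroup.fg_iff _).2
    ⟨_, hn, (finite_setOf_mem_closure_norm_le S n).subset fun _ hg => ⟨hg.1.1, hg.2⟩⟩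

theorem finite_of_fg [Group.FG (FreeGroup α)] : Finite α := by
  classical
  obtain ⟨S, hS⟩ := Group.FG.out (G := FreeGroup α)
  have hletter (a : α) : (a, true) ∈ letters S :=
    mem_letters_of_mem_closure (hS ▸ mem_top (of a)) (by simp [toWord_of])
  exact Finite.of_injective (fun a => (⟨(a, true), hletter a⟩ : letters S))
    fun a b h => by simpa using h

end FreeGroup

theorem IsFreeGroup.exists_mulEquiv_freeGroup_fin (G : Type*) [Group G] [IsFreeGroup G]
    [Group.FG G] : ∃ n, Nonempty (G ≃* FreeGroup (Fin n)) := by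
  have : Group.FG (FreeGroup (Generators G)) :=
    Group.fg_of_surjective (f := (toFreeGroup G).toMonoidHom) (toFreeGroup G).surjective
  have := FreeGroup.finite_of_fg (α := Generators G)
  obtain ⟨n, ⟨e⟩⟩ := Finite.exists_equiv_fin (Generators G)
  exact ⟨n, ⟨(toFreeGroup G).trans (FreeGroup.freeGroupCongr e)⟩⟩

theorem howson_for_free_group_rings
    {α : Type*} (G H : Subgroup (FreeGroup α)) (hG : G.FG) (hH : H.FG) :
    (∀ x : MonoidAlgebra ℤ (FreeGroup α),
        ((x.coeff.support : Set (FreeGroup α)) ⊆ G ∧ (x.coeff.support : Set (FreeGroup α)) ⊆ H) ↔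
          (x.coeff.support : Set (FreeGroup α)) ⊆ (G ⊓ H : Subgroup (FreeGroup α))) ∧
      (G ⊓ H).FG ∧
      ∃ (β : Type) (_ : Finite β), Nonempty (↥(G ⊓ H) ≃* FreeGroup β) := by
  have hfg : (G ⊓ H).FG := FreeGroup.fg_inf hG hH
  refine ⟨fun x => by rw [Subgroup.coe_inf, Set.subset_inter_iff], hfg, ?_⟩
  have : Group.FG ↥(G ⊓ H) := (Group.fg_iff_subgroup_fg _).2 hfg
  obtain ⟨n, he⟩ := IsFreeGroup.exists_mulEquiv_freeGroup_fin ↥(G ⊓ H)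
  exact ⟨Fin n, inferInstance, he⟩
end

section
/- Let R be a commutative ring with 1 ≠ 0, and suppose there exist u, v ∈ R with u ≠ 0 and u·v = 0 and v ≠ 0. Let G be a group containing elements a, b with ab ≠ ba, and suppose the group ring R[G] satisfies ring commutative transitivity restricted away from R (if x commutes with y, y commutes with z, and y ∉ R, then x commutes with z) and satisfies that x² = 0 implies x = 0 for x ∈ R. Then we obtain a contradiction; hence under these hypotheses R is an integral domain. -/
/-! If `u * v = 0` with `v ≠ 0` and `a * b ≠ b * a`, then `u a` and `u b` both commute with the
non-scalar element `v b`, because every product involving it vanishes. Commutative transitivity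
then forces `u a * u b = u b * u a`, i.e. `u² (ab) = u² (ba)`, so `u² = 0`, and reducedness gives
`u = 0`. -/

namespace MonoidAlgebra

variable {R M : Type*} [CommSemiring R] [Monoid M]

theorem single_notMem_range_algebraMap {m : M} {r : R} (hm : m ≠ 1) (hr : r ≠ 0) :
    single m r ∉ Set.range (algebraMap R R[M]) := by
  rintro ⟨s, hs⟩
  rw [coe_algebraMap, Function.comp_apply, Algebra.algebraMap_self, RingHom.id_apply,
    single_inj] at hs
  rcases hs with ⟨h1m, -⟩ | ⟨-, hr0⟩
  exacts [hm h1m.symm, hr hr0]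

theorem commute_single_of_mul_eq_zero {m n : M} {r s : R} (hrs : r * s = 0) :
    Commute (single m r) (single n s) := by
  rw [Commute, SemiconjBy, single_mul_single, single_mul_single, hrs, mul_comm s r, hrs,
    single_zero, single_zero]

theorem sq_eq_zero_of_commTransitive
    (hRCT : ∀ x y z : R[M], y ∉ Set.range (algebraMap R R[M]) →
      x * y = y * x → y * z = z * y → x * z = z * x)
    {u v : R} (hv : v ≠ 0) (huv : u * v = 0) {a b : M} (hab : a * b ≠ b * a) : u ^ 2 = 0 := by
  have hb : b ≠ 1 := by rintro rfl; simp at hab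
  have hcomm : single a u * single b u = single b u * single a u :=
    hRCT _ (single b v) _ (single_notMem_range_algebraMap hb hv)
      (commute_single_of_mul_eq_zero huv)
      (commute_single_of_mul_eq_zero (by rw [mul_comm, huv]))
  rw [single_mul_single, single_mul_single, single_inj] at hcomm
  rcases hcomm with ⟨hab', -⟩ | ⟨huu, -⟩
  exacts [absurd hab' hab, by rw [sq, huu]]

end MonoidAlgebra

theorem rct_forces_domain_general
    {R : Type*} [CommRing R] (u v : R) (hu : u ≠ 0) (hv : v ≠ 0)
    (huv : u * v = 0)
    {G : Type*} [Group G] (a b : G) (hab : a * b ≠ b * a)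
    (hRCT : ∀ x y z : MonoidAlgebra R G,
      y ∉ Set.range (algebraMap R (MonoidAlgebra R G)) →
      x * y = y * x → y * z = z * y → x * z = z * x)
    (hred : ∀ r : R, r ^ 2 = 0 → r = 0) :
    False :=
  hu (hred u (MonoidAlgebra.sq_eq_zero_of_commTransitive hRCT hv huv hab))

theorem rct_forces_domain
    {R : Type*} [CommRing R] [Nontrivial R] (u v : R) (hu : u ≠ 0) (hv : v ≠ 0)
    (huv : u * v = 0)
    {G : Type*} [Group G] (a b : G) (hab : a * b ≠ b * a)
    (hRCT : ∀ x y z : MonoidAlgebra R G,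
      y ∉ Set.range (algebraMap R (MonoidAlgebra R G)) →
      x * y = y * x → y * z = z * y → x * z = z * x)
    (hred : ∀ r : R, r ^ 2 = 0 → r = 0) :
    False :=
  rct_forces_domain_general u v hu hv huv a b hab hRCT hred
end

section
/- Let D be an integral domain and G an orderable group (G admits a bi-invariant linear order). Then the group ring D[G] has only trivial units: every unit of D[G] is of the form u·g with u a unit of D and g ∈ G. -/
/-!
A left order on `G` gives it the two unique products property: for finite nonempty `A, B ⊆ G`
with `|A| |B| > 1` there are two different pairs `(a, b) ∈ A × B` whose product `a * b` arises
from no other pair. If `x * y = 1` in `R[G]`, take `A`, `B` the supports of `x`, `y`: the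
coefficient of `x * y` at such a product is a product of two nonzero coefficients, so the product
is `1`; uniqueness then forces the two pairs
to coincide. Hence `x` and `y` are monomials, and their coefficients are mutually inverse.
-/

open Finset
open scoped MonoidAlgebra

namespace MonoidAlgebra

variable {R G : Type*} [Semiring R]

theorem single_mul_single_eq_one_iff [Nontrivial R] [MulOneClass G] {g h : G} {r s : R} :
    single g r * single h s = 1 ↔ g * h = 1 ∧ r * s = 1 := by
  simp [single_mul_single, one_def, single_inj]

variable [NoZeroDivisors R]

theorem mul_eq_one_of_uniqueMul_of_mul_eq_one [MulOneClass G] {x y : R[G]} (hxy : x * y = 1)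
    {a b : G} (ha : a ∈ x.coeff.support) (hb : b ∈ y.coeff.support)
    (hab : UniqueMul x.coeff.support y.coeff.support a b) : a * b = 1 := by
  have hcoeff : (x * y).coeff (a * b) ≠ 0 := by
    rw [coeff_mul_mul_of_uniqueMul hab]
    exact mul_ne_zero (Finsupp.mem_support_iff.mp ha) (Finsupp.mem_support_iff.mp hb)
  rw [hxy] at hcoeff
  exact Finset.mem_one.mp (support_coeff_one_subset (Finsupp.mem_support_iff.mpr hcoeff))

theorem card_support_mul_card_support_le_one_of_mul_eq_one [Monoid G] [TwoUniqueProds G]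
    {x y : R[G]} (hxy : x * y = 1) : #x.coeff.support * #y.coeff.support ≤ 1 := by
  by_contra! hlt
  obtain ⟨p, hp, q, hq, hpq, hup, huq⟩ := TwoUniqueProds.uniqueMul_of_one_lt_card hlt
  rw [mem_product] at hp hq
  have hp1 := mul_eq_one_of_uniqueMul_of_mul_eq_one hxy hp.1 hp.2 hup
  have hq1 := mul_eq_one_of_uniqueMul_of_mul_eq_one hxy hq.1 hq.2 huq
  obtain ⟨hqp₁, hqp₂⟩ := hup hq.1 hq.2 (hq1.trans hp1.symm)
  exact hpq (Prod.ext hqp₁ hqp₂).symm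

variable [Nontrivial R] [Monoid G] [TwoUniqueProds G]

theorem card_support_eq_one_of_mul_eq_one {x y : R[G]} (hxy : x * y = 1) :
    #x.coeff.support = 1 ∧ #y.coeff.support = 1 := by
  have hx : 0 < #x.coeff.support := card_pos.mpr <| Finsupp.support_nonempty_iff.mpr <|
    coeff_eq_zero.not.mpr (left_ne_zero_of_mul_eq_one hxy)
  have hy : 0 < #y.coeff.support := card_pos.mpr <| Finsupp.support_nonempty_iff.mpr <|
    coeff_eq_zero.not.mpr (right_ne_zero_of_mul_eq_one hxy)
  have hprod : #x.coeff.support * #y.coeff.support = 1 :=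
    (card_support_mul_card_support_le_one_of_mul_eq_one hxy).antisymm (Nat.mul_pos hx hy)
  exact ⟨Nat.eq_one_of_mul_eq_one_right hprod, Nat.eq_one_of_mul_eq_one_left hprod⟩

theorem exists_eq_single_of_isUnit {x : R[G]} (hx : IsUnit x) :
    ∃ g r, IsUnit r ∧ x = single g r := by
  obtain ⟨u, rfl⟩ := hx
  obtain ⟨g, r, -, hr⟩ := Finsupp.card_support_eq_one'.mp
    (card_support_eq_one_of_mul_eq_one u.mul_inv).1
  obtain ⟨h, s, -, hs⟩ := Finsupp.card_support_eq_one'.mp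
    (card_support_eq_one_of_mul_eq_one u.inv_mul).1
  have hu : (u : R[G]) = single g r := coeff_injective hr
  have hu' : ((u⁻¹ : R[G]ˣ) : R[G]) = single h s := coeff_injective hs
  have hrs := (single_mul_single_eq_one_iff.mp (hu ▸ hu' ▸ u.mul_inv)).2
  have hsr := (single_mul_single_eq_one_iff.mp (hu ▸ hu' ▸ u.inv_mul)).2
  exact ⟨g, r, ⟨⟨r, s, hrs, hsr⟩, rfl⟩, hu⟩

end MonoidAlgebra

theorem orderable_group_ring_trivial_units_general
    {D : Type*} [CommRing D] [IsDomain D]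
    {G : Type*} [Group G] [LinearOrder G]
    [CovariantClass G G (· * ·) (· < ·)] :
    ∀ x : MonoidAlgebra D G, IsUnit x →
      ∃ (u : Dˣ) (g : G), x = MonoidAlgebra.single g (u : D) := by
  intro x hx
  obtain ⟨g, r, hr, rfl⟩ := MonoidAlgebra.exists_eq_single_of_isUnit hx
  exact ⟨hr.unit, g, rfl⟩

theorem orderable_group_ring_trivial_units
    {D : Type*} [CommRing D] [IsDomain D]
    {G : Type*} [Group G] [LinearOrder G]
    [CovariantClass G G (· * ·) (· < ·)]
    [CovariantClass G G (Function.swap (· * ·)) (· < ·)] :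
    ∀ x : MonoidAlgebra D G, IsUnit x →
      ∃ (u : Dˣ) (g : G), x = MonoidAlgebra.single g (u : D) :=
  orderable_group_ring_trivial_units_general
end
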